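/- arXiv:1609.06235 — 6 statements merged into one kernel-verified Lean document; each statement's English description precedes it below -/
import Mathlib

section
/- Let $\gamma:[0,1]\to\mathbb{C}$ be a continuous path and let $F$ be a bounded connected component of $\mathbb{C}\setminus\gamma([0,1])$. Then the set $\mathbb{C}\setminus F$ is locally connected. -/
open Set Metric


lemma abs_sub_le_of_mem_uIcc {u w c : ℝ} (hw : w ∈ uIcc u c) : |w - c| ≤ |u - c| := by
  rcases Set.mem_uIcc.mp hw with ⟨h1, h2⟩ | ⟨h1, h2⟩ <;> rw [abs_le] <;> constructor
  · linarith [neg_abs_le (u - c)]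
  · linarith [abs_nonneg (u - c)]
  · linarith [abs_nonneg (u - c)]
  · linarith [le_abs_self (u - c)]

lemma path_image_ulc (γ : ℝ → ℂ) (hγ : ContinuousOn γ (Icc 0 1)) :
    ∀ ε > (0:ℝ), ∃ δ > (0:ℝ), ∀ a ∈ γ '' Icc 0 1, ∀ b ∈ γ '' Icc 0 1, dist a b < δ →
      ∃ C, C ⊆ γ '' Icc 0 1 ∧ IsPreconnected C ∧ a ∈ C ∧ b ∈ C ∧ C ⊆ ball a ε := by
  by_contra hcon
  push_neg at hcon
  obtain ⟨ε, hε, h⟩ := hcon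
  have H : ∀ n : ℕ, ∃ p : ℝ × ℝ, p.1 ∈ Icc (0:ℝ) 1 ∧ p.2 ∈ Icc (0:ℝ) 1 ∧
      dist (γ p.1) (γ p.2) < 1/(n+1) ∧ ∀ C, C ⊆ γ '' Icc 0 1 → IsPreconnected C →
        γ p.1 ∈ C → γ p.2 ∈ C → ¬ C ⊆ ball (γ p.1) ε := by
    intro n
    obtain ⟨a, ⟨s, hs, rfl⟩, b, ⟨t, ht, rfl⟩, hd, hC⟩ := h (1/(n+1)) (by positivity)
    exact ⟨(s, t), hs, ht, hd, hC⟩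
  choose p hp1 hp2 hp3 hp4 using H
  have hpmem : ∀ n, p n ∈ Icc (0:ℝ) 1 ×ˢ Icc (0:ℝ) 1 := fun n => ⟨hp1 n, hp2 n⟩
  obtain ⟨q, hq, φ, hφ, hconv⟩ := (isCompact_Icc.prod isCompact_Icc).tendsto_subseq hpmem
  have hq1 : q.1 ∈ Icc (0:ℝ) 1 := hq.1
  have hq2 : q.2 ∈ Icc (0:ℝ) 1 := hq.2
  have hc1 : Filter.Tendsto (fun n => (p (φ n)).1) Filter.atTop (nhds q.1) :=
    (continuous_fst.tendsto q).comp hconv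
  have hc2 : Filter.Tendsto (fun n => (p (φ n)).2) Filter.atTop (nhds q.2) :=
    (continuous_snd.tendsto q).comp hconv
  have hγ1 : Filter.Tendsto (fun n => γ ((p (φ n)).1)) Filter.atTop (nhds (γ q.1)) :=
    (hγ q.1 hq1).tendsto.comp (tendsto_nhdsWithin_of_tendsto_nhds_of_eventually_within _ hc1
      (Filter.Eventually.of_forall fun n => hp1 (φ n)))
  have hγ2 : Filter.Tendsto (fun n => γ ((p (φ n)).2)) Filter.atTop (nhds (γ q.2)) :=
    (hγ q.2 hq2).tendsto.comp (tendsto_nhdsWithin_of_tendsto_nhds_of_eventually_within _ hc2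
      (Filter.Eventually.of_forall fun n => hp2 (φ n)))
  have heq : γ q.1 = γ q.2 := by
    have hdist : Filter.Tendsto (fun n => dist (γ ((p (φ n)).1)) (γ ((p (φ n)).2)))
        Filter.atTop (nhds (dist (γ q.1) (γ q.2))) := hγ1.dist hγ2
    have hzero : Filter.Tendsto (fun n : ℕ => 1/((φ n : ℝ)+1)) Filter.atTop (nhds 0) :=
      tendsto_one_div_add_atTop_nhds_zero_nat.comp hφ.tendsto_atTop
    exact dist_le_zero.mp (le_of_tendsto_of_tendsto' hdist hzero fun n => (hp3 (φ n)).le)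
  obtain ⟨η₁, hη₁, hball₁⟩ := Metric.continuousWithinAt_iff.mp (hγ q.1 hq1) (ε/3) (by positivity)
  obtain ⟨η₂, hη₂, hball₂⟩ := Metric.continuousWithinAt_iff.mp (hγ q.2 hq2) (ε/3) (by positivity)
  have hev : ∀ᶠ n in Filter.atTop,
      dist ((p (φ n)).1) q.1 < η₁ ∧ dist ((p (φ n)).2) q.2 < η₂ :=
    ((tendsto_iff_dist_tendsto_zero.mp hc1).eventually_lt_const hη₁).and
      ((tendsto_iff_dist_tendsto_zero.mp hc2).eventually_lt_const hη₂)
  obtain ⟨n, hn1, hn2⟩ := hev.exists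
  set u := (p (φ n)).1 with hu
  set v := (p (φ n)).2 with hv
  have husub : uIcc u q.1 ⊆ Icc (0:ℝ) 1 := (ordConnected_Icc).uIcc_subset (hp1 (φ n)) hq1
  have hvsub : uIcc v q.2 ⊆ Icc (0:ℝ) 1 := (ordConnected_Icc).uIcc_subset (hp2 (φ n)) hq2
  have hkey1 : ∀ w ∈ uIcc u q.1, dist (γ w) (γ q.1) < ε/3 := by
    intro w hw
    refine hball₁ (husub hw) ?_
    rw [Real.dist_eq] at hn1 ⊢
    exact lt_of_le_of_lt (abs_sub_le_of_mem_uIcc hw) hn1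
  have hkey2 : ∀ w ∈ uIcc v q.2, dist (γ w) (γ q.2) < ε/3 := by
    intro w hw
    refine hball₂ (hvsub hw) ?_
    rw [Real.dist_eq] at hn2 ⊢
    exact lt_of_le_of_lt (abs_sub_le_of_mem_uIcc hw) hn2
  set C : Set ℂ := γ '' uIcc u q.1 ∪ γ '' uIcc v q.2 with hC
  have hCsub : C ⊆ γ '' Icc 0 1 := by
    rintro z (⟨w, hw, rfl⟩ | ⟨w, hw, rfl⟩)
    · exact ⟨w, husub hw, rfl⟩
    · exact ⟨w, hvsub hw, rfl⟩
  have hCpre : IsPreconnected C := by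
    apply IsPreconnected.union (γ q.1)
    · exact ⟨q.1, right_mem_uIcc, rfl⟩
    · exact heq ▸ ⟨q.2, right_mem_uIcc, rfl⟩
    · exact (isPreconnected_uIcc).image γ (hγ.mono husub)
    · exact (isPreconnected_uIcc).image γ (hγ.mono hvsub)
  have haC : γ u ∈ C := Or.inl ⟨u, left_mem_uIcc, rfl⟩
  have hbC : γ v ∈ C := Or.inr ⟨v, left_mem_uIcc, rfl⟩
  have hCball : C ⊆ ball (γ u) ε := by
    have hu1 : dist (γ u) (γ q.1) < ε/3 := hkey1 u left_mem_uIcc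
    rintro z (⟨w, hw, rfl⟩ | ⟨w, hw, rfl⟩)
    · have := hkey1 w hw
      rw [mem_ball]
      calc dist (γ w) (γ u) ≤ dist (γ w) (γ q.1) + dist (γ q.1) (γ u) := dist_triangle _ _ _
        _ < ε/3 + ε/3 := by rw [dist_comm (γ q.1)]; linarith
        _ < ε := by linarith
    · have h1 := hkey2 w hw
      have h2 : dist (γ q.2) (γ u) < ε/3 := by rw [← heq, dist_comm]; exact hu1
      rw [mem_ball]
      calc dist (γ w) (γ u) ≤ dist (γ w) (γ q.2) + dist (γ q.2) (γ u) := dist_triangle _ _ _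
        _ < ε := by linarith
  exact hp4 (φ n) C hCsub hCpre haC hbC hCball



lemma frontier_connectedComponentIn_subset {K : Set ℂ} (hK : IsClosed K) {z : ℂ} (hz : z ∈ Kᶜ) :
    frontier (connectedComponentIn Kᶜ z) ⊆ K := by
  intro w hw
  by_contra hwK
  set F := connectedComponentIn Kᶜ z with hF
  have hFopen : IsOpen F := hK.isOpen_compl.connectedComponentIn
  have hwcl : w ∈ closure F := hw.1
  have hwo : w ∈ Kᶜ := hwK
  have hccw : IsOpen (connectedComponentIn Kᶜ w) := hK.isOpen_compl.connectedComponentIn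
  have hne : (connectedComponentIn Kᶜ w ∩ F).Nonempty := by
    rcases mem_closure_iff.mp hwcl _ hccw (mem_connectedComponentIn hwo) with ⟨v, hv1, hv2⟩
    exact ⟨v, hv1, hv2⟩
  obtain ⟨v, hv1, hv2⟩ := hne
  have hFw : F = connectedComponentIn Kᶜ w := by
    rw [hF, connectedComponentIn_eq hv2, connectedComponentIn_eq hv1]
  have hwF : w ∈ F := hFw ▸ mem_connectedComponentIn hwo
  rw [hFopen.frontier_eq] at hw
  exact hw.2 hwF



lemma glue_lemma {F : Set ℂ} (hFo : IsOpen F) {x y : ℂ} (hx : x ∉ F) (hy : y ∉ F) {r : ℝ}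
    (hr : 0 < r)
    (hconn : ∀ a b : ℂ, a ∈ frontier F → b ∈ frontier F → dist a b ≤ dist x y →
      ∃ C, C ⊆ Fᶜ ∧ IsPreconnected C ∧ a ∈ C ∧ b ∈ C ∧ C ⊆ ball a r) :
    ∃ T, T ⊆ Fᶜ ∧ IsPreconnected T ∧ x ∈ T ∧ y ∈ T ∧ T ⊆ ball x (dist x y + r) := by
  set s : ℝ → ℂ := fun t => x + t • (y - x) with hs
  have hs0 : s 0 = x := by simp [hs]
  have hs1 : s 1 = y := by simp [hs]
  have hscont : Continuous s := by
    simp only [hs]; fun_prop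
  have hssub : ∀ u v : ℝ, s u - s v = (u - v) • (y - x) := by
    intro u v; simp only [hs]; module
  have hdist : ∀ u v : ℝ, dist (s u) (s v) = |u - v| * dist x y := by
    intro u v
    rw [dist_eq_norm, hssub, norm_smul, Real.norm_eq_abs, dist_eq_norm, norm_sub_rev]
  set G : Set ℝ := s ⁻¹' F with hG
  have hGopen : IsOpen G := hFo.preimage hscont
  have h0G : (0:ℝ) ∉ G := by simp only [hG, mem_preimage, hs0]; exact hx
  have h1G : (1:ℝ) ∉ G := by simp only [hG, mem_preimage, hs1]; exact hy
  set a : ℝ → ℝ := fun t => sSup {u | u ≤ t ∧ u ∉ G} with ha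
  set b : ℝ → ℝ := fun t => sInf {u | t ≤ u ∧ u ∉ G} with hb
  have hfacts : ∀ t, t ∈ Icc (0:ℝ) 1 ∩ G →
      (0 ≤ a t ∧ a t < t ∧ a t ∉ G ∧ Ioc (a t) t ⊆ G) ∧
      (t < b t ∧ b t ≤ 1 ∧ b t ∉ G ∧ Ico t (b t) ⊆ G) := by
    rintro t ⟨⟨ht0, ht1⟩, htG⟩
    have hAne : {u | u ≤ t ∧ u ∉ G}.Nonempty := ⟨0, ht0, h0G⟩
    have hAbdd : BddAbove {u | u ≤ t ∧ u ∉ G} := ⟨t, fun u hu => hu.1⟩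
    have hAcl : IsClosed {u | u ≤ t ∧ u ∉ G} := by
      have he : {u | u ≤ t ∧ u ∉ G} = Iic t ∩ Gᶜ := rfl
      rw [he]; exact isClosed_Iic.inter hGopen.isClosed_compl
    have hamem : a t ≤ t ∧ a t ∉ G := by
      simp only [ha]; exact hAcl.csSup_mem hAne hAbdd
    have ha0 : 0 ≤ a t := by
      simp only [ha]; exact le_csSup hAbdd ⟨ht0, h0G⟩
    have halt : a t < t := lt_of_le_of_ne hamem.1 (fun he => absurd htG (he ▸ hamem.2))
    have hIoc : Ioc (a t) t ⊆ G := by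
      intro u hu
      by_contra huG
      have : u ≤ a t := by simp only [ha]; exact le_csSup hAbdd ⟨hu.2, huG⟩
      exact absurd this (not_le.mpr hu.1)
    have hBne : {u | t ≤ u ∧ u ∉ G}.Nonempty := ⟨1, ht1, h1G⟩
    have hBbdd : BddBelow {u | t ≤ u ∧ u ∉ G} := ⟨t, fun u hu => hu.1⟩
    have hBcl : IsClosed {u | t ≤ u ∧ u ∉ G} := by
      have he : {u | t ≤ u ∧ u ∉ G} = Ici t ∩ Gᶜ := rfl
      rw [he]; exact isClosed_Ici.inter hGopen.isClosed_compl
    have hbmem : t ≤ b t ∧ b t ∉ G := by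
      simp only [hb]; exact hBcl.csInf_mem hBne hBbdd
    have hb1 : b t ≤ 1 := by
      simp only [hb]; exact csInf_le hBbdd ⟨ht1, h1G⟩
    have htb : t < b t := lt_of_le_of_ne hbmem.1 (fun he => absurd htG (he ▸ hbmem.2))
    have hIco : Ico t (b t) ⊆ G := by
      intro u hu
      by_contra huG
      have : b t ≤ u := by simp only [hb]; exact csInf_le hBbdd ⟨hu.1, huG⟩
      exact absurd this (not_le.mpr hu.2)
    exact ⟨⟨ha0, halt, hamem.2, hIoc⟩, ⟨htb, hb1, hbmem.2, hIco⟩⟩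
  have hafr : ∀ t, t ∈ Icc (0:ℝ) 1 ∩ G → s (a t) ∈ frontier F := by
    intro t ht
    obtain ⟨⟨_, halt, haG, hIoc⟩, _⟩ := hfacts t ht
    rw [hFo.frontier_eq]
    refine ⟨?_, haG⟩
    haveI hne : (nhdsWithin (a t) (Ioc (a t) t)).NeBot := by
      rw [← mem_closure_iff_nhdsWithin_neBot, closure_Ioc (ne_of_lt halt)]
      exact ⟨le_refl _, halt.le⟩
    exact mem_closure_of_tendsto (hscont.continuousWithinAt)
      (eventually_mem_nhdsWithin.mono fun u hu => hIoc hu)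
  have hbfr : ∀ t, t ∈ Icc (0:ℝ) 1 ∩ G → s (b t) ∈ frontier F := by
    intro t ht
    obtain ⟨_, ⟨htb, _, hbG, hIco⟩⟩ := hfacts t ht
    rw [hFo.frontier_eq]
    refine ⟨?_, hbG⟩
    haveI hne : (nhdsWithin (b t) (Ico t (b t))).NeBot := by
      rw [← mem_closure_iff_nhdsWithin_neBot, closure_Ico htb.ne]
      exact ⟨htb.le, le_refl _⟩
    exact mem_closure_of_tendsto (hscont.continuousWithinAt)
      (eventually_mem_nhdsWithin.mono fun u hu => hIco hu)
  have habd : ∀ t, t ∈ Icc (0:ℝ) 1 ∩ G → dist (s (a t)) (s (b t)) ≤ dist x y := by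
    intro t ht
    obtain ⟨⟨ha0, halt, _, _⟩, ⟨htb, hb1, _, _⟩⟩ := hfacts t ht
    rw [hdist]
    have h1 : |a t - b t| ≤ 1 := by
      rw [abs_le]; constructor <;> [linarith; linarith]
    calc |a t - b t| * dist x y ≤ 1 * dist x y :=
          mul_le_mul_of_nonneg_right h1 dist_nonneg
      _ = dist x y := one_mul _
  have hCex : ∀ t, t ∈ Icc (0:ℝ) 1 ∩ G → ∃ C, C ⊆ Fᶜ ∧ IsPreconnected C ∧ s (a t) ∈ C ∧
      s (b t) ∈ C ∧ C ⊆ ball (s (a t)) r :=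
    fun t ht => hconn _ _ (hafr t ht) (hbfr t ht) (habd t ht)
  choose! C hC1 hC2 hC3 hC4 hC5 using hCex
  set T : Set ℂ := s '' (Icc 0 1 \ G) ∪ ⋃ t ∈ Icc (0:ℝ) 1 ∩ G, C t with hT
  have hxT : x ∈ T := Or.inl ⟨0, ⟨⟨le_refl 0, zero_le_one⟩, h0G⟩, hs0⟩
  have hyT : y ∈ T := Or.inl ⟨1, ⟨⟨zero_le_one, le_refl 1⟩, h1G⟩, hs1⟩
  have hTF : T ⊆ Fᶜ := by
    rintro z (⟨u, ⟨_, huG⟩, rfl⟩ | hz)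
    · exact huG
    · obtain ⟨t, ht, hzC⟩ := mem_iUnion₂.mp hz
      exact hC1 t ht hzC
  have hTball : T ⊆ ball x (dist x y + r) := by
    have hdx : ∀ u : ℝ, 0 ≤ u → u ≤ 1 → dist (s u) x ≤ dist x y := by
      intro u h0 h1
      have hh : dist (s u) (s 0) = |u - 0| * dist x y := hdist u 0
      rw [hs0] at hh
      rw [hh]
      calc |u - 0| * dist x y ≤ 1 * dist x y := by
            refine mul_le_mul_of_nonneg_right ?_ dist_nonneg
            rw [sub_zero, abs_of_nonneg h0]; exact h1
        _ = dist x y := one_mul _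
    rintro z (⟨u, ⟨⟨h0, h1⟩, _⟩, rfl⟩ | hz)
    · rw [mem_ball]
      have := hdx u h0 h1
      linarith
    · obtain ⟨t, ht, hzC⟩ := mem_iUnion₂.mp hz
      obtain ⟨⟨ha0, halt, _, _⟩, _⟩ := hfacts t ht
      have h1 : dist z (s (a t)) < r := hC5 t ht hzC
      have h2 : dist (s (a t)) x ≤ dist x y := hdx (a t) ha0 (le_trans halt.le ht.1.2)
      rw [mem_ball]
      calc dist z x ≤ dist z (s (a t)) + dist (s (a t)) x := dist_triangle _ _ _
        _ < dist x y + r := by linarith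
  refine ⟨T, hTF, ?_, hxT, hyT, hTball⟩
  intro U V hU hV hTUV hne1 hne2
  obtain ⟨p, hpT, hpU⟩ := hne1
  obtain ⟨q, hqT, hqV⟩ := hne2
  by_contra hcon
  rw [not_nonempty_iff_eq_empty] at hcon
  have main : ∀ W W' : Set ℂ, IsOpen W → IsOpen W' → T ⊆ W ∪ W' → T ∩ (W ∩ W') = ∅ →
      x ∈ W → T ⊆ W := by
    intro W W' hW hW' hTsub hTdisj hxW
    have hTdisj' := eq_empty_iff_forall_notMem.mp hTdisj
    have hCW : ∀ t, t ∈ Icc (0:ℝ) 1 ∩ G → s (a t) ∈ W → C t ⊆ W := by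
      intro t ht hsa
      have hCT : C t ⊆ T := fun z hz => Or.inr (mem_biUnion ht hz)
      by_contra hnc
      obtain ⟨z, hzC, hzW⟩ := not_subset.mp hnc
      have hzW' : z ∈ W' := (hTsub (hCT hzC)).resolve_left hzW
      obtain ⟨w, hw1, hw2⟩ := hC2 t ht W W' hW hW' (hCT.trans hTsub)
        ⟨s (a t), hC3 t ht, hsa⟩ ⟨z, hzC, hzW'⟩
      exact hTdisj' w ⟨hCT hw1, hw2⟩
    have segT : ∀ u ∈ Icc (0:ℝ) 1, u ∉ G → s u ∈ T := fun u hu huG => Or.inl ⟨u, ⟨hu, huG⟩, rfl⟩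
    set S : Set ℝ := {t | t ∈ Icc (0:ℝ) 1 ∧ ∀ u ∈ Icc 0 t, u ∉ G → s u ∈ W} with hS
    have h0S : (0:ℝ) ∈ S := ⟨⟨le_refl 0, zero_le_one⟩, by
      intro u hu _
      have he : u = 0 := le_antisymm hu.2 hu.1
      rw [he, hs0]; exact hxW⟩
    have hSne : S.Nonempty := ⟨0, h0S⟩
    have hSbdd : BddAbove S := ⟨1, fun t ht => ht.1.2⟩
    set c := sSup S with hc
    have hc0 : 0 ≤ c := le_csSup hSbdd h0S
    have hc1 : c ≤ 1 := csSup_le hSne fun t ht => ht.1.2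
    have step1 : ∀ u, 0 ≤ u → u < c → u ∉ G → s u ∈ W := by
      intro u hu0 huc huG
      obtain ⟨t, htS, hlt⟩ := exists_lt_of_lt_csSup hSne huc
      exact htS.2 u ⟨hu0, hlt.le⟩ huG
    have step2 : c ∉ G → s c ∈ W := by
      intro hcG
      rcases eq_or_lt_of_le hc0 with hceq | hcpos
      · rw [← hceq, hs0]; exact hxW
      by_contra hsc
      have hscW' : s c ∈ W' := (hTsub (segT c ⟨hc0, hc1⟩ hcG)).resolve_left hsc
      obtain ⟨η, hη, hball⟩ := Metric.isOpen_iff.mp (hW'.preimage hscont) c hscW'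
      set m := max 0 (c - η) with hm
      have hm0 : 0 ≤ m := le_max_left _ _
      have hmη : c - η ≤ m := le_max_right _ _
      have hmc : m < c := max_lt hcpos (by linarith)
      by_cases hA : ∃ u, m < u ∧ u < c ∧ u ∉ G
      · obtain ⟨u, hmu, huc, huG⟩ := hA
        have hu0 : 0 ≤ u := le_of_lt (lt_of_le_of_lt hm0 hmu)
        have huW : s u ∈ W := step1 u hu0 huc huG
        have huW' : s u ∈ W' := hball (by
          rw [mem_ball, Real.dist_eq, abs_lt]
          constructor
          · linarith
          · linarith)
        exact hTdisj' (s u) ⟨segT u ⟨hu0, le_trans huc.le hc1⟩ huG, huW, huW'⟩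
      · push_neg at hA
        set t₀ := (m + c)/2 with ht₀
        have hmt : m < t₀ := by rw [ht₀]; linarith
        have htc : t₀ < c := by rw [ht₀]; linarith
        have ht₀G : t₀ ∈ G := hA t₀ hmt htc
        have ht₀I : t₀ ∈ Icc (0:ℝ) 1 ∩ G :=
          ⟨⟨le_of_lt (lt_of_le_of_lt hm0 hmt), le_trans htc.le hc1⟩, ht₀G⟩
        obtain ⟨⟨ha0, halt, haG, hIoc⟩, ⟨htb, hb1, hbG, hIco⟩⟩ := hfacts t₀ ht₀I
        have hbc : b t₀ = c := by
          have hle : b t₀ ≤ c := by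
            simp only [hb]; exact csInf_le ⟨t₀, fun u hu => hu.1⟩ ⟨htc.le, hcG⟩
          rcases eq_or_lt_of_le hle with h | h
          · exact h
          · exact absurd (hA (b t₀) (lt_trans hmt htb) h) hbG
        have hsaW : s (a t₀) ∈ W := step1 (a t₀) ha0 (lt_trans halt htc) haG
        have hfin := hCW t₀ ht₀I hsaW (hC4 t₀ ht₀I)
        rw [hbc] at hfin
        exact hsc hfin
    have step3 : ∀ u ∈ Icc (0:ℝ) c, u ∉ G → s u ∈ W := by
      intro u hu huG
      rcases eq_or_lt_of_le hu.2 with h | h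
      · rw [h]; exact step2 (h ▸ huG)
      · exact step1 u hu.1 h huG
    have hceq : c = 1 := by
      by_contra hne1
      have hclt : c < 1 := lt_of_le_of_ne hc1 hne1
      by_cases hcG : c ∈ G
      · have hcI : c ∈ Icc (0:ℝ) 1 ∩ G := ⟨⟨hc0, hc1⟩, hcG⟩
        obtain ⟨⟨ha0, halt, haG, hIoc⟩, ⟨htb, hb1, hbG, hIco⟩⟩ := hfacts c hcI
        have hsaW : s (a c) ∈ W := step3 (a c) ⟨ha0, halt.le⟩ haG
        have hCsub := hCW c hcI hsaW
        have hbS : b c ∈ S := by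
          refine ⟨⟨le_trans hc0 htb.le, hb1⟩, ?_⟩
          intro u hu huG
          rcases lt_or_ge u (b c) with h | h
          · rcases le_or_gt u c with h2 | h2
            · exact step3 u ⟨hu.1, h2⟩ huG
            · exact absurd (hIco ⟨h2.le, h⟩) huG
          · have he : u = b c := le_antisymm hu.2 h
            rw [he]; exact hCsub (hC4 c hcI)
        exact absurd (le_csSup hSbdd hbS) (not_le.mpr htb)
      · have hscW : s c ∈ W := step2 hcG
        obtain ⟨η, hη, hball⟩ := Metric.isOpen_iff.mp (hW.preimage hscont) c hscW
        set t' := min 1 (c + η/2) with ht'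
        have hct' : c < t' := lt_min hclt (by linarith)
        have ht'S : t' ∈ S := by
          refine ⟨⟨le_trans hc0 hct'.le, min_le_left _ _⟩, ?_⟩
          intro u hu huG
          rcases le_or_gt u c with h | h
          · exact step3 u ⟨hu.1, h⟩ huG
          · refine hball ?_
            rw [mem_ball, Real.dist_eq, abs_lt]
            have h2 : u ≤ c + η/2 := le_trans hu.2 (min_le_right _ _)
            constructor
            · linarith
            · linarith
        exact absurd (le_csSup hSbdd ht'S) (not_le.mpr hct')
    rintro z (⟨u, ⟨huI, huG⟩, rfl⟩ | hz)
    · exact step3 u ⟨huI.1, hceq ▸ huI.2⟩ huG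
    · obtain ⟨t, ht, hzC⟩ := mem_iUnion₂.mp hz
      obtain ⟨⟨ha0, halt, haG, _⟩, _⟩ := hfacts t ht
      have hsaW : s (a t) ∈ W := step3 (a t) ⟨ha0, hceq ▸ le_trans halt.le ht.1.2⟩ haG
      exact hCW t ht hsaW hzC
  rcases hTUV hxT with hxU | hxV
  · have hsub := main U V hU hV hTUV hcon hxU
    exact absurd (show q ∈ T ∩ (U ∩ V) from ⟨hqT, hsub hqT, hqV⟩)
      (eq_empty_iff_forall_notMem.mp hcon q)
  · have hcon' : T ∩ (V ∩ U) = ∅ := by rw [inter_comm V U]; exact hcon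
    have hsub := main V U hV hU (by rwa [union_comm]) hcon' hxV
    exact absurd (show p ∈ T ∩ (U ∩ V) from ⟨hpT, hpU, hsub hpT⟩)
      (eq_empty_iff_forall_notMem.mp hcon p)



private theorem aux_main
    (γ : ℝ → ℂ) (hγ : ContinuousOn γ (Icc 0 1))
    (F : Set ℂ)
    (hF : ∃ z ∈ (γ '' Icc 0 1)ᶜ, F = connectedComponentIn ((γ '' Icc 0 1)ᶜ) z)
    (hFb : Bornology.IsBounded F) :
    LocallyConnectedSpace ↥(Fᶜ) := by
  classical
  obtain ⟨z, hz, hFeq⟩ := hF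
  have hKcl : IsClosed (γ '' Icc 0 1) := (isCompact_Icc.image_of_continuousOn hγ).isClosed
  have hFo : IsOpen F := by rw [hFeq]; exact hKcl.isOpen_compl.connectedComponentIn
  have hfr : frontier F ⊆ γ '' Icc 0 1 := by
    rw [hFeq]; exact frontier_connectedComponentIn_subset hKcl hz
  have hKF : γ '' Icc 0 1 ⊆ Fᶜ := by
    intro w hw hwF
    rw [hFeq] at hwF
    exact (connectedComponentIn_subset _ z hwF) hw
  rw [locallyConnectedSpace_iff_connected_subsets]
  rintro ⟨x, hx⟩ U hU
  rw [nhds_induced, Filter.mem_comap] at hU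
  obtain ⟨W, hW, hWU⟩ := hU
  obtain ⟨ε, hε, hballW⟩ := Metric.mem_nhds_iff.mp hW
  obtain ⟨δ, hδ, hδconn⟩ := path_image_ulc γ hγ (ε/4) (by positivity)
  set ρ := min δ (ε/2) with hρ
  have hρpos : 0 < ρ := lt_min hδ (by positivity)
  have hTex : ∀ y : ℂ, y ∈ ball x ρ ∩ Fᶜ → ∃ T, T ⊆ Fᶜ ∧ IsPreconnected T ∧ x ∈ T ∧ y ∈ T ∧
      T ⊆ ball x (dist x y + ε/4) := by
    rintro y ⟨hyb, hyF⟩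
    refine glue_lemma hFo hx hyF (by positivity) ?_
    intro p q hp hq hpq
    have h1 : dist x y < ρ := by rwa [mem_ball, dist_comm] at hyb
    obtain ⟨C, hC1, hC2, hC3, hC4, hC5⟩ := hδconn p (hfr hp) q (hfr hq)
      (lt_of_le_of_lt hpq (lt_of_lt_of_le h1 (min_le_left _ _)))
    exact ⟨C, hC1.trans hKF, hC2, hC3, hC4, hC5⟩
  choose! T hT1 hT2 hT3 hT4 hT5 using hTex
  set g : ℂ → Set ℂ := fun y => if y ∈ ball x ρ ∩ Fᶜ then T y else {x} with hg
  set V : Set ℂ := ⋃ y : ℂ, g y with hV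
  have hxg : ∀ y : ℂ, x ∈ g y := by
    intro y
    simp only [hg]
    split_ifs with h
    · exact hT3 y h
    · exact rfl
  have hVpre : IsPreconnected V :=
    isPreconnected_iUnion ⟨x, mem_iInter.mpr hxg⟩ (by
      intro y
      simp only [hg]
      split_ifs with h
      · exact hT2 y h
      · exact isPreconnected_singleton)
  have hVF : V ⊆ Fᶜ := by
    rintro w hw
    obtain ⟨y, hy⟩ := mem_iUnion.mp hw
    simp only [hg] at hy
    split_ifs at hy with h
    · exact hT1 y h hy
    · rw [mem_singleton_iff] at hy; rw [hy]; exact hx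
  have hVball : V ⊆ ball x ε := by
    rintro w hw
    obtain ⟨y, hy⟩ := mem_iUnion.mp hw
    simp only [hg] at hy
    split_ifs at hy with h
    · have h1 : dist x y < ρ := by
        have := h.1; rwa [mem_ball, dist_comm] at this
      have h2 : ρ ≤ ε/2 := min_le_right _ _
      have := hT5 y h hy
      rw [mem_ball] at this ⊢
      linarith
    · rw [mem_singleton_iff] at hy; rw [hy, mem_ball, dist_self]; exact hε
  have hsubV : ball x ρ ∩ Fᶜ ⊆ V := by
    intro y hy
    refine mem_iUnion.mpr ⟨y, ?_⟩
    simp only [hg, if_pos hy]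
    exact hT4 y hy
  refine ⟨Subtype.val ⁻¹' V, ?_, ?_, ?_⟩
  · refine Filter.mem_of_superset
      ((continuous_subtype_val.continuousAt).preimage_mem_nhds (ball_mem_nhds x hρpos)) ?_
    intro w hw
    exact hsubV ⟨hw, w.2⟩
  · have himg : (Subtype.val '' (Subtype.val ⁻¹' V : Set ↥(Fᶜ))) = V := by
      rw [Subtype.image_preimage_coe]
      exact inter_eq_self_of_subset_right hVF
    exact Topology.IsInducing.subtypeVal.isPreconnected_image.mp (by rw [himg]; exact hVpre)
  · intro w hw
    exact hWU (hballW (hVball hw))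

/-- If `F` is a bounded connected component of the complement of the image of
a continuous path `γ : [0,1] → ℂ`, then `ℂ \ F` is locally connected (as a subspace). -/
theorem complement_of_bounded_component_locallyConnected
    (γ : ℝ → ℂ) (hγ : ContinuousOn γ (Icc 0 1))
    (F : Set ℂ)
    (hF : ∃ z ∈ (γ '' Icc 0 1)ᶜ, F = connectedComponentIn ((γ '' Icc 0 1)ᶜ) z)
    (hFb : Bornology.IsBounded F) :
    LocallyConnectedSpace ↥(Fᶜ) := by
  exact aux_main γ hγ F hF hFb
end

section
/- Let $g:\mathbb{D}\to\mathbb{C}$ be defined by $g(z)=e^{\frac{z+1}{z-1}}$, and let $K\subseteq\mathbb{D}$ be a set with $1\in\overline{K}$. Then $g(z)\to 0$ as $z\to 1$ with $z\in K$ if and only if for every disk $D\subseteq\mathbb{D}$ which is internally tangent to the unit circle at $1$ (i.e., $D$ is the open ball of radius $r$ centered at $1-r$ for some $0<r<1$), there is an $\varepsilon>0$ such that $K\cap B(1;\varepsilon)\subseteq D$. -/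
open Set Metric Filter

/-! The Cayley transform `w = (z + 1) / (z - 1)` has `Re w = (|z|² - 1) / |z - 1|²` and maps the
horodisk `B(1 - r; r)` onto the half-plane `Re w < 1 - 1/r`. Since `|exp w| = exp (Re w)`,
`exp w → 0` along `K` means `Re w → -∞` along `K`, i.e. `K` eventually lies in every such
half-plane, i.e. near `1` in every horodisk. -/

theorem Complex.re_add_one_div_sub_one (z : ℂ) :
    ((z + 1) / (z - 1)).re = (Complex.normSq z - 1) / Complex.normSq (z - 1) := by
  simp only [Complex.div_re, Complex.add_re, Complex.one_re, Complex.sub_re, Complex.normSq_apply,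
    Complex.sub_im, Complex.one_im, sub_zero, Complex.add_im, add_zero]
  ring

theorem mem_ball_one_sub_iff_re_lt {r : ℝ} (hr : 0 < r) {z : ℂ} (hz : z ≠ 1) :
    z ∈ ball (1 - (r : ℂ)) r ↔ ((z + 1) / (z - 1)).re < 1 - 1 / r := by
  have hpos : 0 < Complex.normSq (z - 1) := Complex.normSq_pos.2 (sub_ne_zero.2 hz)
  have key : 1 - 1 / r - (Complex.normSq z - 1) / Complex.normSq (z - 1) =
      (r ^ 2 - Complex.normSq (z - (1 - r))) / (r * Complex.normSq (z - 1)) := by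
    field_simp
    simp only [Complex.normSq_apply, Complex.sub_re, Complex.sub_im, Complex.one_re,
      Complex.one_im, Complex.ofReal_re, Complex.ofReal_im]
    ring
  rw [Complex.re_add_one_div_sub_one, ← sub_pos, key,
    div_pos_iff_of_pos_right (mul_pos hr hpos), sub_pos, mem_ball, dist_eq_norm,
    ← sq_lt_sq₀ (norm_nonneg _) hr.le, Complex.sq_norm]

theorem tendsto_atBot_iff_eventually_lt_one_sub_inv {α : Type*} {l : Filter α} {f : α → ℝ} :
    Tendsto f l atBot ↔ ∀ r : ℝ, 0 < r → r < 1 → ∀ᶠ x in l, f x < 1 - 1 / r := by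
  refine ⟨fun h r _ _ => h.eventually_lt_atBot _, fun h => tendsto_atBot.2 fun b => ?_⟩
  have hb : 0 < 2 + |b| := by positivity
  refine (h (1 / (2 + |b|)) (by positivity) ((div_lt_one hb).2 (by linarith [abs_nonneg b]))).mono
    fun x hx => hx.le.trans ?_
  rw [one_div_one_div]
  linarith [neg_abs_le b]

theorem eventually_nhdsWithin_iff_exists_inter_ball_subset {α : Type*} [PseudoMetricSpace α]
    {x : α} {K s : Set α} :
    (∀ᶠ y in nhdsWithin x K, y ∈ s) ↔ ∃ ε > 0, K ∩ ball x ε ⊆ s := by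
  rw [Filter.eventually_mem_set, mem_nhdsWithin_iff]
  exact exists_congr fun ε => and_congr_right' <| by rw [inter_comm]

theorem convergence_set_for_g_iff_general
    (K : Set ℂ) (hK : K ⊆ ball (0:ℂ) 1) :
    Tendsto (fun z : ℂ => Complex.exp ((z + 1) / (z - 1))) (nhdsWithin 1 K) (nhds 0) ↔
      ∀ r : ℝ, 0 < r → r < 1 →
        ∃ ε > 0, K ∩ ball (1:ℂ) ε ⊆ ball (1 - (r:ℂ)) r := by
  have hK_ne_one : ∀ z ∈ K, z ≠ 1 := fun z hz h => by simpa [h] using hK hz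
  rw [Complex.tendsto_exp_nhds_zero_iff, tendsto_atBot_iff_eventually_lt_one_sub_inv]
  refine forall₂_congr fun r hr => imp_congr_right fun _ => ?_
  rw [← eventually_nhdsWithin_iff_exists_inter_ball_subset]
  exact eventually_congr <| eventually_mem_nhdsWithin.mono fun z hz =>
    (mem_ball_one_sub_iff_re_lt hr (hK_ne_one z hz)).symm

/-- For `g z = exp ((z+1)/(z-1))` and `K ⊆ 𝔻` with `1 ∈ closure K`,
`g z → 0` as `z → 1` within `K` if and only if for every disk `B(1-r; r) ⊆ 𝔻`
(`0 < r < 1`) tangent to the unit circle at `1`, there is `ε > 0` with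
`K ∩ B(1; ε) ⊆ B(1-r; r)`. -/
theorem convergence_set_for_g_iff
    (K : Set ℂ) (hK : K ⊆ ball (0:ℂ) 1) (hK1 : (1:ℂ) ∈ closure K) :
    Tendsto (fun z : ℂ => Complex.exp ((z + 1) / (z - 1))) (nhdsWithin 1 K) (nhds 0) ↔
      ∀ r : ℝ, 0 < r → r < 1 →
        ∃ ε > 0, K ∩ ball (1:ℂ) ε ⊆ ball (1 - (r:ℂ)) r :=
  convergence_set_for_g_iff_general K hK
end

section
/- Let $G$ be a subset of the left half-plane $H_{Re}(-\infty,0)=\{w\in\mathbb{C} : \mathrm{Re}(w)<0\}$. Then $e^w\to 0$ as $w\to\infty$ (i.e., as $|w|\to\infty$) with $w\in G$ if and only if for every $p\in(-\infty,0)$ the set $G\cap\{w : p<\mathrm{Re}(w)<0\}$ is bounded. -/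
open Set Metric Filter

namespace Complex

theorem isBounded_inter_re_gt_of_norm_exp_lt {G : Set ℂ} {M p : ℝ}
    (h : ∀ w ∈ G, M < ‖w‖ → ‖exp w‖ < Real.exp p) :
    Bornology.IsBounded (G ∩ {w : ℂ | p < w.re}) := by
  refine (isBounded_closedBall (x := (0 : ℂ)) (r := M)).subset fun w ⟨hwG, hwp⟩ => ?_
  rw [mem_closedBall, dist_zero_right]
  by_contra! hMw
  have := h w hwG hMw
  rw [norm_exp, Real.exp_lt_exp] at this
  exact this.not_gt hwp

theorem exists_forall_norm_gt_re_le_of_isBounded {G : Set ℂ} {p : ℝ}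
    (h : Bornology.IsBounded (G ∩ {w : ℂ | p < w.re})) :
    ∃ M > (0 : ℝ), ∀ w ∈ G, M < ‖w‖ → w.re ≤ p := by
  obtain ⟨R, hR⟩ := h.subset_closedBall 0
  refine ⟨max R 1, by positivity, fun w hwG hMw => ?_⟩
  by_contra! hwp
  have := hR ⟨hwG, hwp⟩
  rw [mem_closedBall, dist_zero_right] at this
  exact (this.trans_lt ((le_max_left R 1).trans_lt hMw)).false

end Complex

/-- For `G` contained in the left half-plane, `e^w → 0` as `|w| → ∞` with
`w ∈ G` if and only if for every `p < 0` the set `G ∩ {w | p < Re w < 0}` is bounded. -/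
theorem exp_tendsto_zero_iff_strips_bounded
    (G : Set ℂ) (hG : G ⊆ {w : ℂ | w.re < 0}) :
    (∀ ε > (0:ℝ), ∃ M > (0:ℝ), ∀ w ∈ G, M < ‖w‖ → ‖Complex.exp w‖ < ε) ↔
      ∀ p : ℝ, p < 0 →
        Bornology.IsBounded (G ∩ {w : ℂ | p < w.re ∧ w.re < 0}) := by
  constructor
  · intro h p _
    obtain ⟨M, -, hM⟩ := h (Real.exp p) (Real.exp_pos p)
    exact (Complex.isBounded_inter_re_gt_of_norm_exp_lt hM).subset
      (inter_subset_inter_right G fun w hw => hw.1)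
  · intro h ε hε
    obtain ⟨p, hpε, hp⟩ :=
      ((Real.tendsto_exp_atBot.eventually (gt_mem_nhds hε)).and (eventually_lt_atBot 0)).exists
    have hstrip : G ∩ {w : ℂ | p < w.re} ⊆ G ∩ {w : ℂ | p < w.re ∧ w.re < 0} :=
      fun w ⟨hwG, hwp⟩ => ⟨hwG, hwp, hG hwG⟩
    obtain ⟨M, hM, hre⟩ :=
      Complex.exists_forall_norm_gt_re_le_of_isBounded ((h p hp).subset hstrip)
    refine ⟨M, hM, fun w hwG hMw => ?_⟩
    rw [Complex.norm_exp]
    exact (Real.exp_le_exp.2 (hre w hwG hMw)).trans_lt hpε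
end

section
/- Fix $p\in(-\infty,0)$. For every continuous map $\psi:[0,1)\to\mathbb{C}$ such that $p<\mathrm{Re}(\psi(s))<0$ for all $s$ and $|\psi(s)|\to\infty$ as $s\to 1^-$, the limit $\lim_{s\to 1^-} e^{\psi(s)}$ does not exist in $\mathbb{C}$. In other words, the vertical strip $H_{Re}(p,0)$ is a path divergence set for the function $h(w)=e^w$ at $\infty$. -/
open Set Metric Filter

lemma exists_shift_mem_Icc_aux (a y₀ : ℝ) :
    ∃ k : ℤ, y₀ + k * (2 * Real.pi) ∈ Icc a (a + 2 * Real.pi) := by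
  have hπ : (0:ℝ) < 2 * Real.pi := by positivity
  refine ⟨⌈(a - y₀) / (2 * Real.pi)⌉, ?_, ?_⟩
  · have h := Int.le_ceil ((a - y₀) / (2 * Real.pi))
    rw [div_le_iff₀ hπ] at h
    linarith
  · have h := Int.ceil_lt_add_one ((a - y₀) / (2 * Real.pi))
    have h2 := mul_lt_mul_of_pos_right h hπ
    rw [add_mul, div_mul_cancel₀ _ (ne_of_gt hπ), one_mul] at h2
    linarith

/-- For fixed `p < 0`, the vertical strip `{w | p < Re w < 0}` is a path
divergence set for `h w = e^w` at `∞`: along every continuous path `ψ : [0,1) → ℂ`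
staying in the strip with `|ψ s| → ∞` as `s → 1⁻`, the limit of `e^{ψ s}` does not exist. -/
theorem strip_is_path_divergence_set
    (p : ℝ) (hp : p < 0)
    (ψ : ℝ → ℂ) (hψc : ContinuousOn ψ (Ico 0 1))
    (hψG : ∀ s ∈ Ico (0:ℝ) 1, p < (ψ s).re ∧ (ψ s).re < 0)
    (hψtop : Tendsto (fun s => ‖ψ s‖) (nhdsWithin 1 (Iio 1)) atTop) :
    ¬ ∃ L : ℂ, Tendsto (fun s => Complex.exp (ψ s)) (nhdsWithin 1 (Iio 1)) (nhds L) := by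
  rintro ⟨L, hL⟩
  have hπ : (0:ℝ) < Real.pi := Real.pi_pos
  -- key frequently lemma
  have freq : ∀ y₀ : ℝ, ∃ᶠ s in nhdsWithin (1:ℝ) (Iio 1),
      s ∈ Ico (0:ℝ) 1 ∧ Real.cos (ψ s).im = Real.cos y₀ := by
    intro y₀
    rw [frequently_iff]
    intro U hU
    obtain ⟨a, ha, haU⟩ := mem_nhdsLT_iff_exists_Ioo_subset.mp hU
    set a' : ℝ := max a 0 with ha'
    have ha'1 : a' < 1 := by
      simp only [ha', max_lt_iff]
      exact ⟨ha, one_pos⟩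
    set s₀ : ℝ := (a' + 1) / 2 with hs₀
    have hs₀a : a' < s₀ := by rw [hs₀]; linarith
    have hs₀1 : s₀ < 1 := by rw [hs₀]; linarith
    have hs₀0 : 0 ≤ s₀ := le_trans (le_max_right a 0) hs₀a.le
    have hs₀mem : s₀ ∈ Ico (0:ℝ) 1 := ⟨hs₀0, hs₀1⟩
    -- find t close to 1 with big norm
    set M : ℝ := |(ψ s₀).im| + 2 * Real.pi + |p| + 1 with hM
    have hIoo : Ioo s₀ 1 ∈ nhdsWithin (1:ℝ) (Iio 1) :=
      Ioo_mem_nhdsLT_of_mem ⟨hs₀1, le_refl 1⟩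
    obtain ⟨t, htM, hts₀, ht1⟩ := ((hψtop.eventually_ge_atTop M).and hIoo).exists
    have htmem : t ∈ Ico (0:ℝ) 1 := ⟨le_trans hs₀0 hts₀.le, ht1⟩
    -- imaginary part of ψ t is big
    have hrebound : ∀ s ∈ Ico (0:ℝ) 1, |(ψ s).re| ≤ |p| := by
      intro s hs
      obtain ⟨h1, h2⟩ := hψG s hs
      rw [abs_of_neg h2, abs_of_neg hp]
      linarith
    have himt : |(ψ s₀).im| + 2 * Real.pi ≤ |(ψ t).im| := by
      have h1 : ‖ψ t‖ ≤ |(ψ t).re| + |(ψ t).im| := Complex.norm_le_abs_re_add_abs_im _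
      have h2 := hrebound t htmem
      rw [hM] at htM
      linarith
    -- IVT setup
    set m : ℝ := min (ψ s₀).im (ψ t).im with hm
    set M' : ℝ := max (ψ s₀).im (ψ t).im with hM'
    have hgap : m + 2 * Real.pi ≤ M' := by
      have h1 := max_sub_min_eq_abs (ψ s₀).im (ψ t).im
      rw [← hm, ← hM'] at h1
      have h2 := abs_sub_abs_le_abs_sub (ψ t).im (ψ s₀).im
      linarith
    obtain ⟨k, hk⟩ := exists_shift_mem_Icc_aux m y₀
    set y : ℝ := y₀ + k * (2 * Real.pi) with hy
    have hymem : y ∈ uIcc (ψ s₀).im (ψ t).im := by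
      rw [uIcc, ← hm, ← hM']
      exact ⟨hk.1, le_trans hk.2 hgap⟩
    have hsub : uIcc s₀ t ⊆ Ico (0:ℝ) 1 := by
      rw [uIcc_of_le hts₀.le]
      exact fun x hx => ⟨le_trans hs₀0 hx.1, lt_of_le_of_lt hx.2 ht1⟩
    have hcont : ContinuousOn (fun s => (ψ s).im) (uIcc s₀ t) :=
      Complex.continuous_im.comp_continuousOn (hψc.mono hsub)
    obtain ⟨s, hsmem, hsy⟩ := intermediate_value_uIcc hcont hymem
    rw [uIcc_of_le hts₀.le] at hsmem
    refine ⟨s, haU ⟨lt_of_le_of_lt (le_max_left a 0) (lt_of_lt_of_le hs₀a hsmem.1),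
      lt_of_le_of_lt hsmem.2 ht1⟩, hsub (by rw [uIcc_of_le hts₀.le]; exact hsmem), ?_⟩
    have hsy' : (ψ s).im = y := hsy
    rw [hsy', hy]
    push_cast
    exact Real.cos_add_int_mul_two_pi y₀ k
  -- frequently the real part is ≥ exp p
  have hLre : Tendsto (fun s => (Complex.exp (ψ s)).re) (nhdsWithin (1:ℝ) (Iio 1)) (nhds L.re) :=
    (Complex.continuous_re.tendsto L).comp hL
  have h1 : Real.exp p ≤ L.re := by
    have hf : ∃ᶠ s in nhdsWithin (1:ℝ) (Iio 1),
        (Complex.exp (ψ s)).re ∈ Ici (Real.exp p) := by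
      refine (freq 0).mono ?_
      rintro s ⟨hs, hcos⟩
      rw [Real.cos_zero] at hcos
      have := (hψG s hs).1
      simp only [mem_Ici, Complex.exp_re, hcos, mul_one]
      exact Real.exp_le_exp.mpr this.le
    have := mem_closure_of_frequently_of_tendsto hf hLre
    rwa [IsClosed.closure_eq isClosed_Ici] at this
  have h2 : L.re ≤ -Real.exp p := by
    have hf : ∃ᶠ s in nhdsWithin (1:ℝ) (Iio 1),
        (Complex.exp (ψ s)).re ∈ Iic (-Real.exp p) := by
      refine (freq Real.pi).mono ?_
      rintro s ⟨hs, hcos⟩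
      rw [Real.cos_pi] at hcos
      have := (hψG s hs).1
      have hexp : Real.exp p ≤ Real.exp (ψ s).re := Real.exp_le_exp.mpr this.le
      simp only [mem_Iic, Complex.exp_re, hcos, mul_neg_one]
      linarith
    have := mem_closure_of_frequently_of_tendsto hf hLre
    rwa [IsClosed.closure_eq isClosed_Iic] at this
  have := Real.exp_pos p
  linarith
end

section
/- There exists an open, connected, unbounded set $G$ contained in the left half-plane $\{w\in\mathbb{C} : \mathrm{Re}(w)<0\}$, whose set of real parts $\{\mathrm{Re}(w) : w\in G\}$ is unbounded below, such that for every continuous map $\psi:[0,1)\to G$ with $|\psi(s)|\to\infty$ as $s\to 1^-$, the limit $\lim_{s\to 1^-} e^{\psi(s)}$ does not exist in $\mathbb{C}$; that is, $G$ is a path divergence set for $h(w)=e^w$ at $\infty$ which is not contained in any vertical strip $\{w : p<\mathrm{Re}(w)<0\}$. -/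
/-!
Take `G` to be the strip `-1 < Re w < 0` with, for every `n`, a finger `-(n + 2) < Re w < 0`,
`n < Im w < n + 1` attached. Along a path `ψ` to `∞` in `G` with `e^ψ → L`:
if `L = 0`, then `Re ψ → -∞`, so a tail of `ψ` lies in the disjoint open fingers and, being
connected, in a single bounded one, contradicting `|ψ| → ∞`. If `L ≠ 0`, then
`ψ - log (e^ψ / L)` is a continuous lift of the constant `L` through the covering map `exp`,
hence constant on a tail, so `ψ` converges: again a contradiction.
-/

open Set Filter Topology Bornology Complex Function

theorem Convex.reProdIm {s t : Set ℝ} (hs : Convex ℝ s) (ht : Convex ℝ t) :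
    Convex ℝ (s ×ℂ t) :=
  (hs.linear_preimage reLm).inter (ht.linear_preimage imLm)

theorem IsPreconnected.union_iUnion {X ι : Type*} [TopologicalSpace X] [Nonempty ι]
    {s : Set X} {t : ι → Set X} (hs : IsPreconnected s) (ht : ∀ i, IsPreconnected (t i))
    (hst : ∀ i, (s ∩ t i).Nonempty) : IsPreconnected (s ∪ ⋃ i, t i) := by
  obtain ⟨x, hx, -⟩ := hst (Classical.arbitrary ι)
  rw [Set.union_iUnion]
  exact isPreconnected_iUnion ⟨x, mem_iInter.2 fun _ => Or.inl hx⟩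
    fun i => hs.union' (hst i) (ht i)

theorem not_tendsto_norm_atTop_of_eventually_mem {α E : Type*} [SeminormedAddCommGroup E]
    {l : Filter α} [l.NeBot] {f : α → E} {S : Set E} (hS : IsBounded S)
    (hf : ∀ᶠ x in l, f x ∈ S) : ¬ Tendsto (fun x => ‖f x‖) l atTop := by
  rw [tendsto_norm_atTop_iff_cobounded]
  intro h
  exact (hf.and (h (isBounded_def.1 hS))).exists.elim fun _ hx => hx.2 hx.1

section PathToOne

variable {X : Type*} [TopologicalSpace X] {ψ : ℝ → X}

theorem exists_tail_of_eventually {P : ℝ → Prop} (h : ∀ᶠ s in 𝓝[<] (1 : ℝ), P s) :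
    ∃ a ∈ Ico (0 : ℝ) 1, ∀ s ∈ Ioo a 1, P s := by
  obtain ⟨b, hb, hP⟩ := (nhdsLT_basis (1 : ℝ)).eventually_iff.1 h
  exact ⟨max b 0, ⟨le_max_right _ _, max_lt hb one_pos⟩,
    fun s hs => hP ⟨(le_max_left b 0).trans_lt hs.1, hs.2⟩⟩

theorem Ioo_subset_Ico_of_mem_Ico {a : ℝ} (ha : a ∈ Ico (0 : ℝ) 1) : Ioo a 1 ⊆ Ico 0 1 :=
  fun _ hs => ⟨ha.1.trans hs.1.le, hs.2⟩

theorem exists_eventually_mem_of_eventually_mem_iUnion {ι : Type*}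
    (hψ : ContinuousOn ψ (Ico 0 1)) {U : ι → Set X} (hU : ∀ i, IsOpen (U i))
    (hUd : Pairwise (Disjoint on U)) (h : ∀ᶠ s in 𝓝[<] (1 : ℝ), ψ s ∈ ⋃ i, U i) :
    ∃ i, ∀ᶠ s in 𝓝[<] (1 : ℝ), ψ s ∈ U i := by
  obtain ⟨a, ha, hmem⟩ := exists_tail_of_eventually h
  obtain ⟨s₀, hs₀⟩ := nonempty_Ioo.2 ha.2
  obtain ⟨i, hi⟩ := mem_iUnion.1 (hmem s₀ hs₀)
  have htail : IsPreconnected (ψ '' Ioo a 1) :=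
    isPreconnected_Ioo.image ψ (hψ.mono (Ioo_subset_Ico_of_mem_Ico ha))
  have hsplit : ψ '' Ioo a 1 ⊆ U i ∪ ⋃ (j) (_ : j ≠ i), U j := by
    rintro _ ⟨s, hs, rfl⟩
    obtain ⟨j, hj⟩ := mem_iUnion.1 (hmem s hs)
    rcases eq_or_ne j i with rfl | hji
    · exact Or.inl hj
    · exact Or.inr (mem_biUnion hji hj)
  have hsub := htail.subset_left_of_subset_union (hU i)
    (isOpen_biUnion fun j _ => hU j)
    (disjoint_iUnion₂_right.2 fun _ hji => hUd (Ne.symm hji)) hsplit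
    ⟨ψ s₀, mem_image_of_mem ψ hs₀, hi⟩
  exact ⟨i, mem_of_superset (Ioo_mem_nhdsLT ha.2) fun s hs => hsub (mem_image_of_mem ψ hs)⟩

end PathToOne

theorem exists_tendsto_of_tendsto_exp {ψ : ℝ → ℂ} (hψ : ContinuousOn ψ (Ico 0 1)) {L : ℂ}
    (hL0 : L ≠ 0) (hL : Tendsto (fun s => exp (ψ s)) (𝓝[<] 1) (𝓝 L)) :
    ∃ c, Tendsto ψ (𝓝[<] 1) (𝓝 c) := by
  have hratio : Tendsto (fun s => exp (ψ s) / L) (𝓝[<] 1) (𝓝 1) := by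
    simpa [hL0] using hL.div_const L
  obtain ⟨a, ha, hslit⟩ :=
    exists_tail_of_eventually (hratio.eventually (isOpen_slitPlane.mem_nhds one_mem_slitPlane))
  set g : ℝ → ℂ := fun s => ψ s - log (exp (ψ s) / L)
  have hg : ContinuousOn g (Ioo a 1) := by
    have hψ' := hψ.mono (Ioo_subset_Ico_of_mem_Ico ha)
    exact hψ'.sub fun s hs => ((hψ' s hs).cexp.div_const L).clog (hslit s hs)
  have hexp_g : ∀ s, exp (g s) = L := fun s => by
    simp only [g, exp_sub, exp_log (div_ne_zero (exp_ne_zero _) hL0)]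
    field_simp
  obtain ⟨s₀, hs₀⟩ := nonempty_Ioo.2 ha.2
  have hconst : ∀ s ∈ Ioo a 1, g s = g s₀ := fun s hs =>
    isCoveringMap_exp.constOn_of_comp isPreconnected_Ioo hg
      (fun _ _ _ _ => Subtype.ext ((hexp_g _).trans (hexp_g _).symm)) hs hs₀
  refine ⟨g s₀, ?_⟩
  have hlog : Tendsto (fun s => g s₀ + log (exp (ψ s) / L)) (𝓝[<] 1) (𝓝 (g s₀)) := by
    simpa using tendsto_const_nhds.add (hratio.clog one_mem_slitPlane)
  refine hlog.congr' (mem_of_superset (Ioo_mem_nhdsLT ha.2) fun s hs => ?_)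
  change g s₀ + _ = ψ s
  rw [← hconst s hs, sub_add_cancel]

def finger (n : ℕ) : Set ℂ := Ioo (-((n : ℝ) + 2)) 0 ×ℂ Ioo (n : ℝ) (n + 1)

def comb : Set ℂ := (Ioo (-1) 0 ×ℂ univ) ∪ ⋃ n, finger n

theorem isOpen_finger (n : ℕ) : IsOpen (finger n) :=
  isOpen_Ioo.reProdIm isOpen_Ioo

theorem isBounded_finger (n : ℕ) : IsBounded (finger n) :=
  Metric.isBounded_Ioo _ _ |>.reProdIm (Metric.isBounded_Ioo _ _)

theorem pairwise_disjoint_finger : Pairwise (Disjoint on finger) := by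
  intro m n hmn
  refine disjoint_left.2 fun w ⟨_, hm₁, hm₂⟩ ⟨_, hn₁, hn₂⟩ => hmn ?_
  have : m < n + 1 := by exact_mod_cast hm₁.trans hn₂
  have : n < m + 1 := by exact_mod_cast hn₁.trans hm₂
  omega

theorem isOpen_comb : IsOpen comb :=
  (isOpen_Ioo.reProdIm isOpen_univ).union (isOpen_iUnion isOpen_finger)

theorem isConnected_comb : IsConnected comb := by
  have hmid : ∀ t : ℝ, (⟨-1 / 2, t⟩ : ℂ) ∈ Ioo (-1) 0 ×ℂ univ := fun t =>
    ⟨⟨by norm_num, by norm_num⟩, mem_univ t⟩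
  refine ⟨⟨_, Or.inl (hmid 0)⟩, IsPreconnected.union_iUnion
    ((convex_Ioo _ _).reProdIm convex_univ).isPreconnected
    (fun n => ((convex_Ioo _ _).reProdIm (convex_Ioo _ _)).isPreconnected) fun n => ?_⟩
  have hn : (0 : ℝ) ≤ n := n.cast_nonneg
  exact ⟨⟨-1 / 2, n + 1 / 2⟩, hmid _, by constructor <;> constructor <;> dsimp <;> linarith⟩

theorem not_isBounded_comb : ¬ IsBounded comb := by
  intro h
  obtain ⟨C, hC⟩ := isBounded_iff_forall_norm_le.1 h
  have hw : (⟨-1 / 2, |C| + 1⟩ : ℂ) ∈ comb := Or.inl ⟨⟨by norm_num, by norm_num⟩, mem_univ _⟩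
  have := (abs_im_le_norm _).trans (hC _ hw)
  simp only [abs_of_nonneg (by positivity : (0 : ℝ) ≤ |C| + 1)] at this
  linarith [le_abs_self C]

theorem comb_subset_re_neg : comb ⊆ {w : ℂ | w.re < 0} := by
  rintro w (⟨⟨-, hw⟩, -⟩ | hw)
  · exact hw
  · obtain ⟨n, ⟨-, hn⟩, -⟩ := mem_iUnion.1 hw
    exact hn

theorem not_bddBelow_re_comb : ¬ BddBelow (re '' comb) := by
  rintro ⟨c, hc⟩
  obtain ⟨n, hn⟩ := exists_nat_gt (-c)
  have hn₀ : (0 : ℝ) ≤ n := n.cast_nonneg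
  have hw : (⟨-((n : ℝ) + 1), n + 1 / 2⟩ : ℂ) ∈ comb :=
    Or.inr (mem_iUnion.2 ⟨n, by constructor <;> constructor <;> dsimp <;> linarith⟩)
  have : c ≤ -((n : ℝ) + 1) := hc ⟨_, hw, rfl⟩
  linarith

theorem mem_iUnion_finger_of_mem_comb {w : ℂ} (hw : w ∈ comb) (hre : w.re < -1) :
    w ∈ ⋃ n, finger n := by
  rcases hw with ⟨⟨hw, -⟩, -⟩ | hw
  · exact absurd hre hw.not_gt
  · exact hw

theorem exists_eventually_mem_finger_of_tendsto_exp_zero {ψ : ℝ → ℂ}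
    (hψ : ContinuousOn ψ (Ico 0 1)) (hG : ∀ s ∈ Ico (0 : ℝ) 1, ψ s ∈ comb)
    (h0 : Tendsto (fun s => exp (ψ s)) (𝓝[<] 1) (𝓝 0)) :
    ∃ n, ∀ᶠ s in 𝓝[<] (1 : ℝ), ψ s ∈ finger n := by
  have hre : Tendsto (fun s => (ψ s).re) (𝓝[<] 1) atBot := by
    rw [← Real.tendsto_exp_comp_nhds_zero]
    simpa [norm_exp] using h0.norm
  refine exists_eventually_mem_of_eventually_mem_iUnion hψ isOpen_finger
    pairwise_disjoint_finger ?_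
  filter_upwards [hre.eventually_lt_atBot (-1), Ioo_mem_nhdsLT zero_lt_one] with s hs hs₁
  exact mem_iUnion_finger_of_mem_comb (hG s (Ioo_subset_Ico_self hs₁)) hs

/-- There is an open, connected, unbounded set `G` in the left half-plane,
whose set of real parts is unbounded below, which is a path divergence set for `e^w` at
`∞`: along every path to `∞` in `G`, `e^{ψ s}` has no limit. -/
theorem exists_path_divergence_set_not_in_strip :
    ∃ G : Set ℂ,
      IsOpen G ∧ IsConnected G ∧ ¬ Bornology.IsBounded G ∧
      G ⊆ {w : ℂ | w.re < 0} ∧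
      ¬ BddBelow (Complex.re '' G) ∧
      (∀ ψ : ℝ → ℂ, ContinuousOn ψ (Ico 0 1) → (∀ s ∈ Ico (0:ℝ) 1, ψ s ∈ G) →
        Tendsto (fun s => ‖ψ s‖) (nhdsWithin 1 (Iio 1)) atTop →
        ¬ ∃ L : ℂ, Tendsto (fun s => Complex.exp (ψ s)) (nhdsWithin 1 (Iio 1)) (nhds L)) := by
  refine ⟨comb, isOpen_comb, isConnected_comb, not_isBounded_comb, comb_subset_re_neg,
    not_bddBelow_re_comb, fun ψ hψ hG hnorm ⟨L, hL⟩ => ?_⟩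
  rcases eq_or_ne L 0 with rfl | hL0
  · obtain ⟨n, hn⟩ := exists_eventually_mem_finger_of_tendsto_exp_zero hψ hG hL
    exact not_tendsto_norm_atTop_of_eventually_mem (isBounded_finger n) hn hnorm
  · obtain ⟨c, hc⟩ := exists_tendsto_of_tendsto_exp hψ hL0 hL
    exact not_tendsto_atTop_of_tendsto_nhds hc.norm hnorm
end

section
/- Let $S(z)=\frac{-iz+i}{z+1}$, let $G=\{x+iy\in\mathbb{C} : y>|x|^{3/2}\}$, and let $K=\{z\in\mathbb{D} : S(z)\in G\}$. Then $1\in\overline{K}$ and $K$ is a convergence set for $g(z)=e^{\frac{z+1}{z-1}}$ at $1$ in which $g$ approaches $0$: namely, $g(z)\to 0$ as $z\to 1$ with $z\in K$. -/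
/-!
In the coordinate `w = S z` of the upper half-plane, `(z + 1)/(z - 1) = -i/w`, so
`|g z| = exp (-Im w / |w|²)`. On the cusp `|Re w|^p < Im w` with `p < 2` we have
`(Re w)² < (Im w)^(2/p)`, hence `|w|² / Im w < (Im w)^(2/p - 1) + Im w`, which tends to `0` with `w`;
so `Im w / |w|² → ∞` and `g z → 0`. The real radius `(0, 1)` is mapped into the imaginary axis,
which lies in the cusp, so `1` is in the closure of `K`.
-/

open Set Metric Filter Complex Topology

noncomputable def diskToUpperHalfPlane (z : ℂ) : ℂ := (-I * z + I) / (z + 1)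

def cusp (p : ℝ) : Set ℂ := {w | |w.re| ^ p < w.im}

lemma diskToUpperHalfPlane_one : diskToUpperHalfPlane 1 = 0 := by
  simp [diskToUpperHalfPlane]

lemma continuousAt_diskToUpperHalfPlane_one : ContinuousAt diskToUpperHalfPlane 1 :=
  ContinuousAt.div (by fun_prop) (by fun_prop) (by norm_num)

lemma diskToUpperHalfPlane_ofReal (t : ℝ) :
    diskToUpperHalfPlane t = ((1 - t) / (1 + t) : ℝ) * I := by
  rw [diskToUpperHalfPlane, ofReal_div, div_mul_eq_mul_div]
  push_cast
  congr 1 <;> ring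

-- Holds at `z = ±1` too, both sides being `0` there by the convention `x / 0 = 0`.
lemma add_one_div_sub_one (z : ℂ) : (z + 1) / (z - 1) = -I / diskToUpperHalfPlane z := by
  rw [diskToUpperHalfPlane, div_div_eq_mul_div,
    show -I * z + I = -I * (z - 1) by ring, mul_div_mul_left _ _ (neg_ne_zero.2 I_ne_zero)]

lemma im_pos_of_mem_cusp {p : ℝ} {w : ℂ} (hw : w ∈ cusp p) : 0 < w.im :=
  (Real.rpow_nonneg (abs_nonneg _) _).trans_lt hw

lemma ne_zero_of_mem_cusp {p : ℝ} {w : ℂ} (hw : w ∈ cusp p) : w ≠ 0 := by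
  rintro rfl
  exact (im_pos_of_mem_cusp hw).ne' rfl

lemma normSq_div_im_lt_of_mem_cusp {p : ℝ} (hp : 0 < p) {w : ℂ} (hw : w ∈ cusp p) :
    normSq w / w.im < w.im ^ (2 / p - 1) + w.im := by
  have hy := im_pos_of_mem_cusp hw
  have hx : |w.re| < w.im ^ p⁻¹ := (Real.lt_rpow_inv_iff_of_pos (abs_nonneg _) hy.le hp).2 hw
  have hx2 : w.re * w.re < w.im ^ (2 / p) := by
    calc w.re * w.re = |w.re| ^ 2 := by rw [sq_abs, sq]
      _ < (w.im ^ p⁻¹) ^ 2 := by gcongr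
      _ = w.im ^ (2 / p) := by
        rw [← Real.rpow_natCast, ← Real.rpow_mul hy.le]; ring_nf
  rw [normSq_apply, Real.rpow_sub_one hy.ne', add_div, mul_self_div_self]
  gcongr

lemma tendsto_im_div_normSq_cusp {p : ℝ} (hp : 0 < p) (hp2 : p < 2) :
    Tendsto (fun w : ℂ => w.im / normSq w) (𝓝[cusp p] 0) atTop := by
  have him : Tendsto im (𝓝[cusp p] 0) (𝓝[>] 0) :=
    tendsto_nhdsWithin_iff.2 ⟨(continuous_im.tendsto' 0 0 rfl).mono_left nhdsWithin_le_nhds,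
      eventually_nhdsWithin_of_forall fun w hw => im_pos_of_mem_cusp hw⟩
  have hbound : Tendsto (fun y : ℝ => y ^ (2 / p - 1) + y) (𝓝[>] 0) (𝓝 0) := by
    have hexp : 0 < 2 / p - 1 := by rw [sub_pos, lt_div_iff₀ hp]; linarith
    have hcont : ContinuousAt (fun y : ℝ => y ^ (2 / p - 1) + y) 0 :=
      (Real.continuousAt_rpow_const 0 _ (Or.inr hexp.le)).add continuousAt_id
    simpa [Real.zero_rpow hexp.ne'] using hcont.tendsto.mono_left nhdsWithin_le_nhds
  have hsq : Tendsto (fun w : ℂ => normSq w / w.im) (𝓝[cusp p] 0) (𝓝[>] 0) := by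
    refine tendsto_nhdsWithin_iff.2 ⟨tendsto_of_tendsto_of_tendsto_of_le_of_le'
      tendsto_const_nhds (hbound.comp him) ?_ ?_, ?_⟩ <;>
      filter_upwards [self_mem_nhdsWithin] with w hw
    · exact div_nonneg (normSq_nonneg w) (im_pos_of_mem_cusp hw).le
    · exact (normSq_div_im_lt_of_mem_cusp hp hw).le
    · exact div_pos (normSq_pos.2 (ne_zero_of_mem_cusp hw)) (im_pos_of_mem_cusp hw)
  exact hsq.inv_tendsto_nhdsGT_zero.congr fun w => inv_div _ _

lemma re_neg_I_div (w : ℂ) : (-I / w).re = -(w.im / normSq w) := by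
  simp [div_re, neg_div]

lemma tendsto_exp_neg_I_div_cusp {p : ℝ} (hp : 0 < p) (hp2 : p < 2) :
    Tendsto (fun w : ℂ => exp (-I / w)) (𝓝[cusp p] 0) (𝓝 0) := by
  refine tendsto_exp_comap_re_atBot.comp (tendsto_comap_iff.2 ?_)
  simpa only [Function.comp_def, re_neg_I_div] using
    tendsto_neg_atTop_atBot.comp (tendsto_im_div_normSq_cusp hp hp2)

lemma tendsto_diskToUpperHalfPlane_one (s t : Set ℂ) :
    Tendsto diskToUpperHalfPlane (𝓝[s ∩ diskToUpperHalfPlane ⁻¹' t] 1) (𝓝[t] 0) := by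
  rw [← diskToUpperHalfPlane_one]
  exact continuousAt_diskToUpperHalfPlane_one.continuousWithinAt.tendsto_nhdsWithin
    fun _ hz => hz.2

lemma one_mem_closure_ball_inter_preimage_cusp {p : ℝ} (hp : p ≠ 0) :
    (1 : ℂ) ∈ closure (ball 0 1 ∩ diskToUpperHalfPlane ⁻¹' cusp p) := by
  have h1 : (1 : ℝ) ∈ closure (Ioo 0 1) := by
    rw [closure_Ioo zero_ne_one]; exact right_mem_Icc.2 zero_le_one
  rw [← ofReal_one]
  refine map_mem_closure continuous_ofReal h1 fun t ht => ⟨?_, ?_⟩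
  · simpa [abs_of_pos ht.1] using ht.2
  · simp only [cusp, mem_preimage, mem_ofPred_eq, diskToUpperHalfPlane_ofReal, mul_I_re, mul_I_im,
      ofReal_re, ofReal_im, neg_zero, abs_zero, Real.zero_rpow hp]
    exact div_pos (by linarith [ht.2]) (by linarith [ht.1])

/-- With `S z = (-iz + i)/(z + 1)` and `G = {x + iy | y > |x|^(3/2)}`, the
set `K = {z ∈ 𝔻 | S z ∈ G}` has `1` in its closure and is a convergence set for
`g z = exp ((z+1)/(z-1))` at `1` in which `g` approaches `0`. -/
theorem cusp_region_is_convergence_set_for_g :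
    (1:ℂ) ∈ closure {z ∈ ball (0:ℂ) 1 |
        |((-Complex.I * z + Complex.I) / (z + 1)).re| ^ ((3:ℝ)/2) <
          ((-Complex.I * z + Complex.I) / (z + 1)).im} ∧
      Tendsto (fun z : ℂ => Complex.exp ((z + 1) / (z - 1)))
        (nhdsWithin 1 {z ∈ ball (0:ℂ) 1 |
          |((-Complex.I * z + Complex.I) / (z + 1)).re| ^ ((3:ℝ)/2) <
            ((-Complex.I * z + Complex.I) / (z + 1)).im})
        (nhds 0) := by
  change (1 : ℂ) ∈ closure (ball 0 1 ∩ diskToUpperHalfPlane ⁻¹' cusp (3 / 2)) ∧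
    Tendsto (fun z : ℂ => exp ((z + 1) / (z - 1)))
      (𝓝[ball 0 1 ∩ diskToUpperHalfPlane ⁻¹' cusp (3 / 2)] 1) (𝓝 0)
  refine ⟨one_mem_closure_ball_inter_preimage_cusp (by norm_num), ?_⟩
  simp_rw [add_one_div_sub_one]
  exact (tendsto_exp_neg_I_div_cusp (by norm_num) (by norm_num)).comp
    (tendsto_diskToUpperHalfPlane_one _ _)
end
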